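/- Let C^{p,q} (p ≥ −1, q ≥ 0) be a double complex of k-vector spaces with horizontal differential δ: C^{p,q} → C^{p+1,q} and vertical differential d, such that each row 0 → C^{−1,q} → C^{0,q} → C^{1,q} → ⋯ is exact. Let D^{p,q} be another such double complex with exact rows, and let π_p: C^{p,•} → D^{p,•} (p ≥ 0) together with P: C^{−1,•} → D^{−1,•} form a morphism of double complexes. If each π_p for p ≥ 0 is a quasi-isomorphism of cochain complexes, then P: C^{−1,•} → D^{−1,•} is a quasi-isomorphism. -/

import Mathlib

/-!
Let `Z p = ker δ (p + 1) ⊆ X (p + 1)`. Exactness of the rows gives short exact sequences of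
complexes `0 ⟶ Z p ⟶ X (p + 1) ⟶ Z (p + 1) ⟶ 0`, and `δ 0` identifies `X 0` with `Z 0`.
The maps `Z p ⟶ Z' p` induced by `f` between the corresponding kernels of the two rows are then
quasi-isomorphisms, by induction on the degree `j`: by the long exact homology sequences and the
four lemma, injectivity on `H^j` at `p` follows from the isomorphisms on `H^(j-1)` at `p + 1`,
and surjectivity on `H^j` at `p` additionally uses injectivity on `H^j` at `p + 1`.
-/

open CategoryTheory Limits HomologicalComplex

namespace HomologicalComplex.HomologySequence

open ComposableArrows Abelian

variable {𝒞 ι : Type*} [Category 𝒞] [Abelian 𝒞] {c : ComplexShape ι}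
  {S₁ S₂ : ShortComplex (HomologicalComplex 𝒞 c)} (φ : S₁ ⟶ S₂)

lemma mono_homologyMap_τ₁ (hS₁ : S₁.ShortExact) (hS₂ : S₂.ShortExact) (j : ι)
    (h₁ : ∀ i, c.Rel i j → Epi (homologyMap φ.τ₂ i))
    (h₂ : ∀ i, c.Rel i j → Mono (homologyMap φ.τ₃ i))
    (h₃ : Mono (homologyMap φ.τ₂ j)) :
    Mono (homologyMap φ.τ₁ j) := by
  by_cases hj : ∃ i, c.Rel i j
  · obtain ⟨i, hij⟩ := hj
    apply mono_of_epi_of_mono_of_mono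
      ((δ₀Functor ⋙ δlastFunctor).map (mapComposableArrows₅ φ hS₁ hS₂ i j hij))
    · exact (composableArrows₅_exact hS₁ i j hij).δ₀.δlast
    · exact (composableArrows₅_exact hS₂ i j hij).δ₀.δlast
    · exact h₁ i hij
    · exact h₂ i hij
    · exact h₃
  · have := hS₁.mono_f
    have := mono_homologyMap_of_mono_of_not_rel S₁.f j (by simpa using hj)
    have eq : homologyMap φ.τ₁ j ≫ homologyMap S₂.f j =
        homologyMap S₁.f j ≫ homologyMap φ.τ₂ j := by
      simp only [← homologyMap_comp, φ.comm₁₂]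
    exact mono_of_mono_fac eq

lemma epi_homologyMap_τ₁ (hS₁ : S₁.ShortExact) (hS₂ : S₂.ShortExact) (j : ι)
    (h₁ : ∀ i, c.Rel i j → Epi (homologyMap φ.τ₃ i))
    (h₂ : Epi (homologyMap φ.τ₂ j))
    (h₃ : Mono (homologyMap φ.τ₃ j)) :
    Epi (homologyMap φ.τ₁ j) := by
  by_cases hj : ∃ i, c.Rel i j
  · obtain ⟨i, hij⟩ := hj
    apply epi_of_epi_of_epi_of_mono
      ((δ₀Functor ⋙ δ₀Functor).map (mapComposableArrows₅ φ hS₁ hS₂ i j hij))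
    · exact (composableArrows₅_exact hS₁ i j hij).δ₀.δ₀
    · exact (composableArrows₅_exact hS₂ i j hij).δ₀.δ₀
    · exact h₁ i hij
    · exact h₂
    · exact h₃
  · have := hS₂.mono_f
    have := mono_homologyMap_of_mono_of_not_rel S₂.f j (by simpa using hj)
    exact ShortComplex.epi_of_mono_of_epi_of_mono
      ((homologyFunctor 𝒞 c j).mapShortComplex.map φ)
      (hS₁.homology_exact₂ j) this h₂ h₃

end HomologicalComplex.HomologySequence

lemma CategoryTheory.ShortComplex.Exact.isIso_kernelLift
    {𝒞 : Type*} [Category 𝒞] [Abelian 𝒞] {S : ShortComplex 𝒞} (hS : S.Exact) [Mono S.f] :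
    IsIso (kernel.lift S.g S.f S.zero) :=
  have := mono_of_mono_fac (kernel.lift_ι S.g S.f S.zero)
  have := hS.epi_kernelLift
  isIso_of_mono_of_epi _

namespace CochainComplex

variable {𝒞 : Type*} [Category 𝒞] [Abelian 𝒞]

variable {X : ℕ → CochainComplex 𝒞 ℕ} {δ : ∀ p, X p ⟶ X (p + 1)}
  (hδ : ∀ p, δ p ≫ δ (p + 1) = 0)

noncomputable def kernelShortComplex (p : ℕ) : ShortComplex (CochainComplex 𝒞 ℕ) :=
  ShortComplex.mk (kernel.ι (δ (p + 1))) (kernel.lift (δ (p + 2)) (δ (p + 1)) (hδ (p + 1)))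
    (by simp [← cancel_mono (kernel.ι (δ (p + 2)))])

lemma kernelShortComplex_shortExact
    (hexact : ∀ p, (ShortComplex.mk (δ p) (δ (p + 1)) (hδ p)).Exact) (p : ℕ) :
    (kernelShortComplex hδ p).ShortExact where
  exact := ShortComplex.exact_of_f_is_kernel _
    (isKernelOfComp (kernel.ι (δ (p + 2))) (δ (p + 1)) (kernelIsKernel (δ (p + 1))) _
      (kernel.lift_ι _ _ _))
  mono_f := by dsimp [kernelShortComplex]; infer_instance
  epi_g := (hexact (p + 1)).epi_kernelLift

variable {Y : ℕ → CochainComplex 𝒞 ℕ} {δ' : ∀ p, Y p ⟶ Y (p + 1)}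
  (hδ' : ∀ p, δ' p ≫ δ' (p + 1) = 0)
  {f : ∀ p, X p ⟶ Y p}

noncomputable def kernelMap (hf : ∀ p, f p ≫ δ' p = δ p ≫ f (p + 1)) (p : ℕ) :
    kernel (δ (p + 1)) ⟶ kernel (δ' (p + 1)) :=
  kernel.map _ _ (f (p + 1)) (f (p + 2)) (hf (p + 1)).symm

noncomputable def kernelShortComplexMap (hf : ∀ p, f p ≫ δ' p = δ p ≫ f (p + 1)) (p : ℕ) :
    kernelShortComplex hδ p ⟶ kernelShortComplex hδ' p where
  τ₁ := kernelMap hf p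
  τ₂ := f (p + 1)
  τ₃ := kernelMap hf (p + 1)
  comm₁₂ := by simp [kernelShortComplex, kernelMap]
  comm₂₃ := by
    simp [← cancel_mono (kernel.ι (δ' (p + 2))), kernelShortComplex, kernelMap, hf]

lemma quasiIso_kernelMap (hf : ∀ p, f p ≫ δ' p = δ p ≫ f (p + 1))
    (hexact : ∀ p, (ShortComplex.mk (δ p) (δ (p + 1)) (hδ p)).Exact)
    (hexact' : ∀ p, (ShortComplex.mk (δ' p) (δ' (p + 1)) (hδ' p)).Exact)
    (hqis : ∀ p, QuasiIso (f (p + 1))) (p : ℕ) :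
    QuasiIso (kernelMap hf p) := by
  have hS := kernelShortComplex_shortExact hδ hexact
  have hS' := kernelShortComplex_shortExact hδ' hexact'
  rw [quasiIso_iff]
  intro j
  rw [quasiIsoAt_iff_isIso_homologyMap]
  induction j using Nat.strong_induction_on generalizing p with
  | _ j ih =>
    have lt_of_rel : ∀ i, (ComplexShape.up ℕ).Rel i j → i < j := fun i hij => by
      simp only [ComplexShape.up_Rel] at hij; omega
    have hmono : ∀ p, Mono (homologyMap (kernelMap hf p) j) := fun p =>
      HomologySequence.mono_homologyMap_τ₁ (kernelShortComplexMap hδ hδ' hf p) (hS p) (hS' p) j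
        (fun i _ => inferInstanceAs (Epi (homologyMap (f (p + 1)) i)))
        (fun i hij => have := ih i (lt_of_rel i hij) (p + 1)
          inferInstanceAs (Mono (homologyMap (kernelMap hf (p + 1)) i)))
        (inferInstanceAs (Mono (homologyMap (f (p + 1)) j)))
    have hepi : ∀ p, Epi (homologyMap (kernelMap hf p) j) := fun p =>
      HomologySequence.epi_homologyMap_τ₁ (kernelShortComplexMap hδ hδ' hf p) (hS p) (hS' p) j
        (fun i hij => have := ih i (lt_of_rel i hij) (p + 1)
          inferInstanceAs (Epi (homologyMap (kernelMap hf (p + 1)) i)))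
        (inferInstanceAs (Epi (homologyMap (f (p + 1)) j))) (hmono (p + 1))
    exact isIso_of_mono_of_epi _

theorem quasiIso_zero_of_exact (hf : ∀ p, f p ≫ δ' p = δ p ≫ f (p + 1))
    (hexact : ∀ p, (ShortComplex.mk (δ p) (δ (p + 1)) (hδ p)).Exact)
    (hexact' : ∀ p, (ShortComplex.mk (δ' p) (δ' (p + 1)) (hδ' p)).Exact)
    [Mono (δ 0)] [Mono (δ' 0)] (hqis : ∀ p, QuasiIso (f (p + 1))) :
    QuasiIso (f 0) := by
  have := (hexact 0).isIso_kernelLift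
  have := (hexact' 0).isIso_kernelLift
  refine (quasiIso_iff_of_arrow_mk_iso _ _ (Arrow.isoMk (asIso (kernel.lift (δ 1) (δ 0) (hδ 0)))
    (asIso (kernel.lift (δ' 1) (δ' 0) (hδ' 0))) ?_)).2
    (quasiIso_kernelMap hδ hδ' hf hexact hexact' hqis 0)
  simp [← cancel_mono (kernel.ι (δ' 1)), kernelMap, hf]

end CochainComplex

namespace HomologicalComplex

variable {R ι : Type*} [Ring R] {c : ComplexShape ι} {X Y Z : HomologicalComplex (ModuleCat R) c}

lemma comp_eq_zero_of_range_eq_ker {f : X ⟶ Y} {g : Y ⟶ Z}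
    (h : ∀ i, LinearMap.range (f.f i).hom = LinearMap.ker (g.f i).hom) : f ≫ g = 0 := by
  ext i : 1
  exact ModuleCat.hom_ext (LinearMap.range_le_ker_iff.1 (h i).le)

lemma exact_of_range_eq_ker {f : X ⟶ Y} {g : Y ⟶ Z}
    (h : ∀ i, LinearMap.range (f.f i).hom = LinearMap.ker (g.f i).hom) :
    (ShortComplex.mk f g (comp_eq_zero_of_range_eq_ker h)).Exact :=
  exact_of_degreewise_exact _ fun i => (ShortComplex.moduleCat_exact_iff_range_eq_ker _).2 (h i)

lemma mono_of_injective {f : X ⟶ Y} (h : ∀ i, Function.Injective (f.f i)) : Mono f :=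
  mono_of_mono_f _ fun i => (ModuleCat.mono_iff_injective _).2 (h i)

end HomologicalComplex

/-- Let `C^{p,q}` (`p ≥ −1`, `q ≥ 0`) be a double complex of `k`-vector
spaces with exact rows (including the augmentation column `C^{−1,•}`), let `D^{p,q}` be
another such double complex with exact rows, and let `π_p : C^{p,•} → D^{p,•}` be a
morphism of double complexes. If `π_p` is a quasi-isomorphism for all `p ≥ 0`, then the
augmentation map `P = π_{−1} : C^{−1,•} → D^{−1,•}` is a quasi-isomorphism.

Here columns are reindexed by `p : ℕ`, with index `0` corresponding to `p = −1`;
each column is a cochain complex of `k`-modules indexed by `q : ℕ`. -/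
theorem stmt_8 (k : Type) [Field k]
    (C D : ℕ → CochainComplex (ModuleCat k) ℕ)
    (δC : ∀ p, C p ⟶ C (p + 1)) (δD : ∀ p, D p ⟶ D (p + 1))
    (π : ∀ p, C p ⟶ D p)
    (hcomm : ∀ p, π p ≫ δD p = δC p ≫ π (p + 1))
    (hrowC₀ : ∀ q, Function.Injective ((δC 0).f q))
    (hrowC : ∀ p q, LinearMap.range ((δC p).f q).hom = LinearMap.ker ((δC (p + 1)).f q).hom)
    (hrowD₀ : ∀ q, Function.Injective ((δD 0).f q))
    (hrowD : ∀ p q, LinearMap.range ((δD p).f q).hom = LinearMap.ker ((δD (p + 1)).f q).hom)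
    (hqis : ∀ p, QuasiIso (π (p + 1))) :
    QuasiIso (π 0) := by
  have := HomologicalComplex.mono_of_injective hrowC₀
  have := HomologicalComplex.mono_of_injective hrowD₀
  exact CochainComplex.quasiIso_zero_of_exact
    (fun p => HomologicalComplex.comp_eq_zero_of_range_eq_ker (hrowC p))
    (fun p => HomologicalComplex.comp_eq_zero_of_range_eq_ker (hrowD p)) hcomm
    (fun p => HomologicalComplex.exact_of_range_eq_ker (hrowC p))
    (fun p => HomologicalComplex.exact_of_range_eq_ker (hrowD p)) hqis
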